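/- Let q be a prime power, h, k, n, m positive integers with p = char(F_q) ≥ h, and let α₁, …, α_n ∈ F_{q^h} generate F_{q^h} over F_q and lie in pairwise distinct q-Frobenius orbits, and let t₁, …, t_m ∈ F_q be pairwise distinct. Fix a normal element ω of F_{q^h} over F_q. Define the code C ⊆ F_{q^h}^{n+m+1} as the set of vectors ( f(α₁), …, f(α_n), Σ_{i=0}^{h−1} f^{(i)}(t₁) ω^{q^i}, …, Σ_{i=0}^{h−1} f^{(i)}(t_m) ω^{q^i}, Σ_{i=0}^{h−1} f_{hk−h+i} ω^{q^i} ) for f = Σ_j f_j X^j ∈ F_q[X] with deg f < hk. Then C is an F_q-linear MDS code: |C| = q^{hk} and every nonzero codeword has Hamming weight at least n + m + 1 − (k − 1) = n + m − k + 2. -/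

import Mathlib

/-!
A nonzero `f` of degree `< hk` is divisible by the minimal polynomial of every `α_r` at which
it vanishes, and by `(X - t_j)^h` at every `t_j` whose derivative coordinate vanishes: linear independence of the conjugates of `ω` makes that coordinate vanish
only if `f^{(i)}(t_j) = 0` for all `i < h`, and `h ≤ p` turns this into root multiplicity `≥ h`.
These divisors all have degree `h` and are pairwise coprime: minimal polynomials of elements in
distinct Frobenius orbits are distinct irreducibles, and having degree `h ≥ 2` they have no root
`t_j`. So `h` times the number of vanishing finite coordinates is at most `deg f < hk`, and
`< hk - h` when the coordinate at infinity (the top `h` coefficients) vanishes too. Hence at most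
`k - 1` coordinates vanish, and the weight bound forces injectivity on polynomials of degree `< hk`.
-/

open Polynomial Finset Function

section FiniteField

variable {F K : Type*} [Field F] [Fintype F] [Field K] [Finite K] [Algebra F K]

theorem exists_eq_pow_card_pow_of_minpoly_eq {x y : K} (h : minpoly F x = minpoly F y) :
    ∃ s : ℕ, x = y ^ Fintype.card F ^ s := by
  obtain ⟨σ, rfl⟩ := (Normal.minpoly_eq_iff_mem_orbit K).mp h
  obtain ⟨s, rfl⟩ := (FiniteField.bijective_frobeniusAlgEquivOfAlgebraic_pow F K).2 σ
  refine ⟨s, ?_⟩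
  simp [AlgEquiv.coe_pow, FiniteField.coe_frobeniusAlgEquivOfAlgebraic_iterate]

theorem isCoprime_minpoly_of_forall_ne_pow {x y : K}
    (h : ∀ s : ℕ, x ≠ y ^ Fintype.card F ^ s) : IsCoprime (minpoly F x) (minpoly F y) := by
  have hx : IsIntegral F x := .of_finite F x
  have hy : IsIntegral F y := .of_finite F y
  rw [(minpoly.irreducible hx).coprime_iff_not_dvd]
  intro hdvd
  have hroot : aeval x (minpoly F y) = 0 := by
    obtain ⟨g, hg⟩ := hdvd
    rw [hg, map_mul, minpoly.aeval, zero_mul]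
  have := minpoly.eq_of_irreducible_of_monic (minpoly.irreducible hy) hroot (minpoly.monic hy)
  obtain ⟨s, hs⟩ := exists_eq_pow_card_pow_of_minpoly_eq this.symm
  exact h s hs

end FiniteField

theorem isCoprime_X_sub_C_pow_of_one_lt_natDegree {R : Type*} [Field R] {P : R[X]}
    (hP : Irreducible P) (hdeg : 1 < P.natDegree) (t : R) (e : ℕ) :
    IsCoprime P ((X - C t) ^ e) := by
  refine IsCoprime.pow_right ((hP.coprime_iff_not_dvd).mpr fun hdvd => ?_)
  have := natDegree_le_of_dvd hdvd (X_sub_C_ne_zero t)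
  rw [natDegree_X_sub_C] at this
  omega

theorem X_sub_C_pow_dvd_of_iterate_derivative_eval_eq_zero {R : Type*} [CommRing R] [IsDomain R]
    {p : ℕ} [CharP R p] {e : ℕ} (he : e ≤ p) {f : R[X]} {t : R}
    (hf : ∀ i < e, eval t (derivative^[i] f) = 0) : (X - C t) ^ e ∣ f := by
  rcases eq_or_ne f 0 with rfl | hf0
  · exact dvd_zero _
  rcases Nat.eq_zero_or_pos e with rfl | he0
  · simp
  rw [← le_rootMultiplicity_iff hf0, ← Nat.sub_add_cancel he0, Nat.add_one_le_iff]
  refine lt_rootMultiplicity_of_isRoot_iterate_derivative_of_mem_nonZeroDivisors' hf0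
    (fun i hi => hf i (by omega)) fun i hi hi0 => mem_nonZeroDivisors_of_ne_zero ?_
  rw [Ne, CharP.cast_eq_zero_iff R p]
  exact fun hdvd => absurd (Nat.le_of_dvd (Nat.pos_of_ne_zero hi0) hdvd) (by omega)

theorem sum_range_algebraMap_mul_eq_zero_iff {F K : Type*} [CommRing F] [Ring K] [Algebra F K]
    {e : ℕ} {v : ℕ → K} (hv : LinearIndependent F fun i : Fin e => v i) {c : ℕ → F} :
    ∑ i ∈ range e, algebraMap F K (c i) * v i = 0 ↔ ∀ i < e, c i = 0 := by
  rw [← Fin.sum_univ_eq_sum_range (fun i => algebraMap F K (c i) * v i)]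
  simp_rw [← Algebra.smul_def]
  refine ⟨fun hsum i hi => Fintype.linearIndependent_iff.mp hv (fun i => c i) hsum ⟨i, hi⟩,
    fun hc => Finset.sum_eq_zero fun i _ => by rw [hc i i.isLt, zero_smul]⟩

theorem mul_card_le_natDegree_of_pairwise_isCoprime_dvd {R ι : Type*} [CommRing R] [IsDomain R]
    {s : Finset ι} {P : ι → R[X]} {f : R[X]} {e : ℕ} (hf : f ≠ 0)
    (hcop : (s : Set ι).Pairwise (IsCoprime on P)) (hdvd : ∀ i ∈ s, P i ∣ f)
    (hdeg : ∀ i ∈ s, e ≤ (P i).natDegree) : e * #s ≤ f.natDegree := by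
  have hP0 : ∀ i ∈ s, P i ≠ 0 := fun i hi => ne_zero_of_dvd_ne_zero hf (hdvd i hi)
  calc e * #s = ∑ _i ∈ s, e := by rw [sum_const, smul_eq_mul, mul_comm]
    _ ≤ ∑ i ∈ s, (P i).natDegree := sum_le_sum hdeg
    _ = (∏ i ∈ s, P i).natDegree := (natDegree_prod _ _ hP0).symm
    _ ≤ f.natDegree := natDegree_le_of_dvd (prod_dvd_of_coprime hcop hdvd) hf

theorem Pairwise.sumElim_isCoprime {R ι κ : Type*} [CommSemiring R] {P : ι → R} {Q : κ → R}
    (hP : Pairwise (IsCoprime on P)) (hQ : Pairwise (IsCoprime on Q))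
    (hPQ : ∀ i j, IsCoprime (P i) (Q j)) : Pairwise (IsCoprime on Sum.elim P Q) := by
  rintro (i | i) (j | j) hij
  · exact hP fun h => hij (congrArg _ h)
  · exact hPQ i j
  · exact (hPQ j i).symm
  · exact hQ fun h => hij (congrArg _ h)

theorem card_filter_univ_sum {α β : Type*} [Fintype α] [Fintype β] (p : α ⊕ β → Prop)
    [DecidablePred p] :
    #{x | p x} = #{a | p (Sum.inl a)} + #{b | p (Sum.inr b)} := by
  simp only [card_filter, Fintype.sum_sum_type]

theorem mem_degreeLT_sub_of_coeff_eq_zero {R : Type*} [Semiring R] {f : R[X]} {N e : ℕ}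
    (hf : f ∈ degreeLT R N) (hc : ∀ i < e, f.coeff (N - e + i) = 0) :
    f ∈ degreeLT R (N - e) := by
  rw [mem_degreeLT, degree_lt_iff_coeff_zero] at hf ⊢
  intro j hj
  by_cases hjN : N ≤ j
  · exact hf j hjN
  · simpa [show N - e + (j - (N - e)) = j by omega] using hc (j - (N - e)) (by omega)

theorem hammingNorm_add_card_filter_eq_zero {ι K : Type*} [Fintype ι] [Zero K] [DecidableEq K]
    (g : ι → K) : hammingNorm g + #{i | g i = 0} = Fintype.card ι := by
  rw [hammingNorm, add_comm]
  exact card_filter_add_card_filter_not _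

theorem mul_card_add_card_le_natDegree {Fq K : Type*} [Field Fq] [Fintype Fq] [Field K]
    [Finite K] [Algebra Fq K] {p h n m : ℕ} [CharP Fq p] (hph : h ≤ p) (hh : 2 ≤ h)
    (hrank : Module.finrank Fq K = h) {α : Fin n → K}
    (hgen : ∀ r, IntermediateField.adjoin Fq {α r} = ⊤)
    (horb : ∀ r r', r ≠ r' → ∀ s : ℕ, α r ≠ α r' ^ Fintype.card Fq ^ s)
    {t : Fin m → Fq} (ht : Injective t) {f : Fq[X]} (hf0 : f ≠ 0)
    {A : Finset (Fin n)} (hA : ∀ r ∈ A, aeval (α r) f = 0)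
    {B : Finset (Fin m)} (hB : ∀ j ∈ B, ∀ i < h, eval (t j) (derivative^[i] f) = 0) :
    h * (#A + #B) ≤ f.natDegree := by
  set P : Fin n ⊕ Fin m → Fq[X] :=
    Sum.elim (fun r => minpoly Fq (α r)) fun j => (X - C (t j)) ^ h
  have hdeg : ∀ r, (minpoly Fq (α r)).natDegree = h := fun r =>
    hrank ▸ (Field.primitive_element_iff_minpoly_natDegree_eq Fq (α r)).mp (hgen r)
  have hcop : Pairwise (IsCoprime on P) := by
    refine Pairwise.sumElim_isCoprime
      (fun r r' hr => isCoprime_minpoly_of_forall_ne_pow (horb r r' hr))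
      (fun j j' hj => (pairwise_coprime_X_sub_C ht hj).pow) fun r j => ?_
    exact isCoprime_X_sub_C_pow_of_one_lt_natDegree (minpoly.irreducible (.of_finite Fq (α r)))
      (by rw [hdeg r]; omega) _ _
  rw [← card_disjSum]
  refine mul_card_le_natDegree_of_pairwise_isCoprime_dvd hf0 (hcop.set_pairwise _) ?_ ?_
  · rintro (r | j) hx <;> simp only [inl_mem_disjSum, inr_mem_disjSum] at hx
    · exact minpoly.dvd Fq (α r) (hA r hx)
    · exact X_sub_C_pow_dvd_of_iterate_derivative_eval_eq_zero hph (hB j hx)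
  · rintro (r | j) - <;> simp [P, hdeg]

section ExtendedCode

variable {Fq K : Type*} [Field Fq] [Fintype Fq] [Field K] [Algebra Fq K] {n m : ℕ}

noncomputable def extendedCodeword (h k : ℕ) (α : Fin n → K) (t : Fin m → Fq) (ω : K)
    (f : Fq[X]) : Fin n ⊕ Fin m ⊕ Unit → K :=
  Sum.elim (fun r => aeval (α r) f) <| Sum.elim
    (fun j =>
      ∑ i ∈ range h, algebraMap Fq K (eval (t j) (derivative^[i] f)) * ω ^ Fintype.card Fq ^ i)
    fun _ => ∑ i ∈ range h, algebraMap Fq K (f.coeff (h * k - h + i)) * ω ^ Fintype.card Fq ^ i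

variable {h k : ℕ} {α : Fin n → K} {t : Fin m → Fq} {ω : K}

theorem extendedCodeword_sub (f g : Fq[X]) :
    extendedCodeword h k α t ω (f - g) =
      extendedCodeword h k α t ω f - extendedCodeword h k α t ω g := by
  funext x
  rcases x with r | j | u <;>
    simp [extendedCodeword, sub_mul, sum_sub_distrib]

theorem extendedCodeword_inr_inl_eq_zero_iff
    (hω : LinearIndependent Fq fun i : Fin h => ω ^ Fintype.card Fq ^ (i : ℕ)) (f : Fq[X])
    (j : Fin m) :
    extendedCodeword h k α t ω f (Sum.inr (Sum.inl j)) = 0 ↔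
      ∀ i < h, eval (t j) (derivative^[i] f) = 0 :=
  sum_range_algebraMap_mul_eq_zero_iff hω

theorem extendedCodeword_inr_inr_eq_zero_iff
    (hω : LinearIndependent Fq fun i : Fin h => ω ^ Fintype.card Fq ^ (i : ℕ)) (f : Fq[X]) :
    extendedCodeword h k α t ω f (Sum.inr (Sum.inr ())) = 0 ↔
      ∀ i < h, f.coeff (h * k - h + i) = 0 :=
  sum_range_algebraMap_mul_eq_zero_iff hω

theorem card_zeros_extendedCodeword_lt [DecidableEq K] [Finite K] {p : ℕ} [CharP Fq p]
    (hph : h ≤ p) (hh : 2 ≤ h) (hrank : Module.finrank Fq K = h)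
    (hgen : ∀ r, IntermediateField.adjoin Fq {α r} = ⊤)
    (horb : ∀ r r', r ≠ r' → ∀ s : ℕ, α r ≠ α r' ^ Fintype.card Fq ^ s)
    (ht : Injective t)
    (hω : LinearIndependent Fq fun i : Fin h => ω ^ Fintype.card Fq ^ (i : ℕ))
    {f : Fq[X]} (hf : f ∈ degreeLT Fq (h * k)) (hf0 : f ≠ 0) :
    #{x | extendedCodeword h k α t ω f x = 0} < k := by
  have hroots := mul_card_add_card_le_natDegree hph hh hrank hgen horb ht hf0
    (A := {r | extendedCodeword h k α t ω f (Sum.inl r) = 0}) (fun r hr => (mem_filter.mp hr).2)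
    (B := {j | extendedCodeword h k α t ω f (Sum.inr (Sum.inl j)) = 0})
    fun j hj => (extendedCodeword_inr_inl_eq_zero_iff hω f j).mp (mem_filter.mp hj).2
  have hdeg : f.natDegree < h * k := (natDegree_lt_iff_degree_lt hf0).mpr (mem_degreeLT.mp hf)
  rw [card_filter_univ_sum, card_filter_univ_sum]
  by_cases htop : extendedCodeword h k α t ω f (Sum.inr (Sum.inr ())) = 0
  · have hdeg' : f.natDegree < h * (k - 1) := by
      rw [Nat.mul_sub_one]
      exact (natDegree_lt_iff_degree_lt hf0).mpr <| mem_degreeLT.mp <|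
        mem_degreeLT_sub_of_coeff_eq_zero hf <|
          (extendedCodeword_inr_inr_eq_zero_iff hω f).mp htop
    have hunit : #{u : Unit | extendedCodeword h k α t ω f (Sum.inr (Sum.inr u)) = 0} ≤ 1 :=
      card_le_univ _
    have := Nat.lt_of_mul_lt_mul_left (hroots.trans_lt hdeg')
    omega
  · have hunit : #{u : Unit | extendedCodeword h k α t ω f (Sum.inr (Sum.inr u)) = 0} = 0 := by
      rw [card_eq_zero, filter_eq_empty_iff]
      exact fun _ _ => htop
    have := Nat.lt_of_mul_lt_mul_left (hroots.trans_lt hdeg)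
    omega

theorem le_hammingNorm_extendedCodeword [DecidableEq K] [Finite K] {p : ℕ} [CharP Fq p]
    (hph : h ≤ p) (hh : 2 ≤ h) (hrank : Module.finrank Fq K = h)
    (hgen : ∀ r, IntermediateField.adjoin Fq {α r} = ⊤)
    (horb : ∀ r r', r ≠ r' → ∀ s : ℕ, α r ≠ α r' ^ Fintype.card Fq ^ s)
    (ht : Injective t)
    (hω : LinearIndependent Fq fun i : Fin h => ω ^ Fintype.card Fq ^ (i : ℕ))
    {f : Fq[X]} (hf : f ∈ degreeLT Fq (h * k)) (hf0 : f ≠ 0) :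
    n + m + 2 - k ≤ hammingNorm (extendedCodeword h k α t ω f) := by
  have hzeros := card_zeros_extendedCodeword_lt hph hh hrank hgen horb ht hω hf hf0
  have hsplit := hammingNorm_add_card_filter_eq_zero (extendedCodeword h k α t ω f)
  simp only [Fintype.card_sum, Fintype.card_fin, Fintype.card_unit] at hsplit
  omega

end ExtendedCode

theorem extended_code_is_MDS
    (Fq K : Type) [Field Fq] [Fintype Fq] [Field K] [DecidableEq K]
    [Algebra Fq K]
    (p h k n m : ℕ) (hchar : ringChar Fq = p) (hph : h ≤ p)
    (hh : 2 ≤ h) (hkn : k ≤ n)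
    (hrank : Module.finrank Fq K = h)
    (α : Fin n → K)
    (hgen : ∀ r, IntermediateField.adjoin Fq {α r} = ⊤)
    (horb : ∀ r r', r ≠ r' → ∀ s : ℕ, α r ≠ (α r') ^ (Fintype.card Fq) ^ s)
    (t : Fin m → Fq) (ht : Function.Injective t)
    (ω : K)
    (hω : LinearIndependent Fq (fun i : Fin h => ω ^ (Fintype.card Fq) ^ (i : ℕ))) :
    ∀ cw : Polynomial Fq → (Fin n ⊕ Fin m ⊕ Unit → K),
      (cw = fun f x =>
        (match x with
        | Sum.inl r => Polynomial.aeval (α r) f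
        | Sum.inr (Sum.inl jj) =>
            ∑ i ∈ Finset.range h,
              algebraMap Fq K
                  (Polynomial.eval (t jj) ((⇑Polynomial.derivative)^[i] f)) *
                ω ^ (Fintype.card Fq) ^ i
        | Sum.inr (Sum.inr _) =>
            ∑ i ∈ Finset.range h,
              algebraMap Fq K (f.coeff (h * k - h + i)) *
                ω ^ (Fintype.card Fq) ^ i : K)) →
      Nat.card ↥(cw '' (Polynomial.degreeLT Fq (h * k) : Set (Polynomial Fq)))
          = (Fintype.card Fq) ^ (h * k) ∧
      ∀ f ∈ Polynomial.degreeLT Fq (h * k), f ≠ 0 →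
        n + m + 2 - k ≤ hammingNorm (cw f) := by
  intro cw hcw
  replace hcw : cw = extendedCodeword h k α t ω := by
    rw [hcw]; funext f x; rcases x with r | j | u <;> rfl
  subst hcw
  have : CharP Fq p := hchar ▸ ringChar.charP Fq
  have : FiniteDimensional Fq K := .of_finrank_pos (by omega)
  have : Finite K := Module.finite_of_finite Fq
  have hweight := fun f (hf : f ∈ degreeLT Fq (h * k)) (hf0 : f ≠ 0) =>
    le_hammingNorm_extendedCodeword hph hh hrank hgen horb ht hω hf hf0
  have hinj : Set.InjOn (extendedCodeword h k α t ω) (degreeLT Fq (h * k)) := by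
    intro f hf g hg hfg
    by_contra hne
    have := hweight (f - g) (sub_mem hf hg) (sub_ne_zero.mpr hne)
    rw [extendedCodeword_sub, hfg, sub_self, hammingNorm_zero] at this
    omega
  refine ⟨?_, hweight⟩
  rw [Nat.card_image_of_injOn hinj]
  exact (Nat.card_congr (degreeLTEquiv Fq (h * k)).toEquiv).trans (by simp)
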